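/- arXiv:1909.07800 — 5 statements merged into one kernel-verified Lean document; each statement's English description precedes it below -/
import Mathlib

section
/- Let A and B be groups, let w ∈ F_∞ be a word in n letters, let W = {w}, and let g ∈ (A ∗ B)^n. Then there exists u ∈ W(A ∗ B) ∩ [A,B] such that w(g) = w(π_A(g)) · w(π_B(g)) · u, where π_A : A ∗ B → A and π_B : A ∗ B → B are the canonical projections applied coordinatewise. Moreover this decomposition is unique: if w(g) = a·b·c with a ∈ A, b ∈ B and c ∈ [A,B], then a = w(π_A(g)), b = w(π_B(g)) and c = u. -/
open Monoid
open scoped commutatorElement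

/-!
The kernel of the canonical map `A ∗ B → A × B` is exactly `[A,B]`: the commutators `[a,b]` lie in
it, and modulo the normal subgroup `[A,B]` the two factors commute, so the quotient map factors
through `A × B`. Hence `x ∈ [A,B]` iff `π_A x = 1` and `π_B x = 1`. Since `π_A` and `π_B` are
homomorphisms, `π_A (w(g)) = w(π_A g)` and `π_B (w(g)) = w(π_B g)`, so
`u := (w(π_A g) · w(π_B g))⁻¹ · w(g)` lies in `[A,B]`; it is a product of word values, hence
verbal. Applying `π_A` and `π_B` to any decomposition `w(g) = a · b · c` recovers `a` and `b`.
-/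

/-- The verbal subgroup `W(G)`: the subgroup of `G` generated by all evaluations of the
words of `W` at tuples of elements of `G`. -/
def verbalSubgroup (W : Set (FreeGroup ℕ)) (G : Type*) [Group G] : Subgroup G :=
  Subgroup.closure {x | ∃ w ∈ W, ∃ f : ℕ → G, FreeGroup.lift f w = x}

/-- The subgroup `[A,B]` of the free product `A ∗ B` generated by the commutators
`[a,b] = a * b * a⁻¹ * b⁻¹` with `a ∈ A`, `b ∈ B`. -/
def commSubgroup (A B : Type*) [Group A] [Group B] : Subgroup (Coprod A B) :=
  Subgroup.closure {x | ∃ (a : A) (b : B), x = ⁅(Coprod.inl a : Coprod A B), Coprod.inr b⁆}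

theorem FreeGroup.lift_comp_apply {α G H : Type*} [Group G] [Group H] (φ : G →* H) (f : α → G)
    (w : FreeGroup α) : FreeGroup.lift (fun a => φ (f a)) w = φ (FreeGroup.lift f w) :=
  (FreeGroup.lift_unique (φ.comp (FreeGroup.lift f)) fun _ => by simp).symm

theorem map_lift_mem_verbalSubgroup {W : Set (FreeGroup ℕ)} {G H : Type*} [Group G] [Group H]
    (φ : H →* G) {w : FreeGroup ℕ} (hw : w ∈ W) (f : ℕ → H) :
    φ (FreeGroup.lift f w) ∈ verbalSubgroup W G :=
  Subgroup.subset_closure ⟨w, hw, fun i => φ (f i), FreeGroup.lift_comp_apply φ f w⟩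

section CommSubgroup

variable {A B : Type*} [Group A] [Group B]

theorem commutatorElement_mem_commSubgroup (a : A) (b : B) :
    ⁅(Coprod.inl a : Coprod A B), Coprod.inr b⁆ ∈ commSubgroup A B :=
  Subgroup.subset_closure ⟨a, b, rfl⟩

theorem range_inl_le_normalizer_commSubgroup :
    (Coprod.inl : A →* Coprod A B).range ≤ Subgroup.normalizer (commSubgroup A B : Set (Coprod A B)) := by
  unfold commSubgroup
  rw [Subgroup.le_normalizer_closure_iff]
  rintro _ ⟨a', rfl⟩ _ ⟨a, b, rfl⟩
  -- `a' [a,b] a'⁻¹ = [a'a, b] [a', b]⁻¹`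
  convert (Subgroup.closure _).mul_mem (commutatorElement_mem_commSubgroup (a' * a) b)
    ((Subgroup.closure _).inv_mem (commutatorElement_mem_commSubgroup a' b)) using 1
  simp only [commutatorElement_def, map_mul]
  group

theorem range_inr_le_normalizer_commSubgroup :
    (Coprod.inr : B →* Coprod A B).range ≤ Subgroup.normalizer (commSubgroup A B : Set (Coprod A B)) := by
  unfold commSubgroup
  rw [Subgroup.le_normalizer_closure_iff]
  rintro _ ⟨b', rfl⟩ _ ⟨a, b, rfl⟩
  -- `b' [a,b] b'⁻¹ = [a, b']⁻¹ [a, b'b]`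
  convert (Subgroup.closure _).mul_mem
    ((Subgroup.closure _).inv_mem (commutatorElement_mem_commSubgroup a b'))
    (commutatorElement_mem_commSubgroup a (b' * b)) using 1
  simp only [commutatorElement_def, map_mul]
  group

instance commSubgroup_normal : (commSubgroup A B).Normal := by
  rw [← Subgroup.normalizer_eq_top_iff, eq_top_iff, ← Coprod.closure_range_inl_union_inr,
    Subgroup.closure_le]
  exact Set.union_subset range_inl_le_normalizer_commSubgroup
    range_inr_le_normalizer_commSubgroup

theorem commSubgroup_le_ker_toProd :
    commSubgroup A B ≤ (Coprod.toProd : Coprod A B →* A × B).ker := by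
  rw [commSubgroup, Subgroup.closure_le]
  rintro _ ⟨a, b, rfl⟩
  simp [commutatorElement_def]

theorem ker_toProd_le_commSubgroup :
    (Coprod.toProd : Coprod A B →* A × B).ker ≤ commSubgroup A B := by
  let q := QuotientGroup.mk' (commSubgroup A B)
  have hcomm : ∀ (a : A) (b : B), Commute (q (Coprod.inl a)) (q (Coprod.inr b)) := fun a b => by
    rw [← commutatorElement_eq_one_iff_commute, ← map_commutatorElement, ← MonoidHom.mem_ker,
      QuotientGroup.ker_mk']
    exact commutatorElement_mem_commSubgroup a b
  have hfactor : ((q.comp Coprod.inl).noncommCoprod (q.comp Coprod.inr) hcomm).comp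
      Coprod.toProd = q := by
    apply Coprod.hom_ext <;> ext <;> simp [MonoidHom.noncommCoprod_apply]
  intro x hx
  rw [← QuotientGroup.ker_mk' (commSubgroup A B), MonoidHom.mem_ker]
  change q x = 1
  rw [← hfactor,
    MonoidHom.comp_apply, MonoidHom.mem_ker.1 hx, map_one]

theorem commSubgroup_eq_ker_toProd :
    commSubgroup A B = (Coprod.toProd : Coprod A B →* A × B).ker :=
  le_antisymm commSubgroup_le_ker_toProd ker_toProd_le_commSubgroup

theorem mem_commSubgroup_iff {x : Coprod A B} :
    x ∈ commSubgroup A B ↔ Coprod.fst x = 1 ∧ Coprod.snd x = 1 := by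
  rw [commSubgroup_eq_ker_toProd, MonoidHom.mem_ker, ← Coprod.prod_mk_fst_snd, Prod.mk_eq_one]

end CommSubgroup

/-- Unique decomposition `w(g) = w(π_A(g)) · w(π_B(g)) · u` with
`u ∈ W(A ∗ B) ∩ [A,B]`, for a single word `w` and `W = {w}`. -/
theorem word_eval_decomposition {A B : Type*} [Group A] [Group B]
    (w : FreeGroup ℕ) (g : ℕ → Coprod A B) :
    ∃ u ∈ verbalSubgroup {w} (Coprod A B) ⊓ commSubgroup A B,
      FreeGroup.lift g w =
        Coprod.inl (FreeGroup.lift (fun i => Coprod.fst (g i)) w) *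
          Coprod.inr (FreeGroup.lift (fun i => Coprod.snd (g i)) w) * u ∧
      ∀ (a : A) (b : B), ∀ c ∈ commSubgroup A B,
        FreeGroup.lift g w = Coprod.inl a * Coprod.inr b * c →
          a = FreeGroup.lift (fun i => Coprod.fst (g i)) w ∧
          b = FreeGroup.lift (fun i => Coprod.snd (g i)) w ∧ c = u := by
  rw [FreeGroup.lift_comp_apply Coprod.fst g w, FreeGroup.lift_comp_apply Coprod.snd g w]
  set x := FreeGroup.lift g w
  refine ⟨(Coprod.inl (Coprod.fst x) * Coprod.inr (Coprod.snd x))⁻¹ * x, ⟨?verbal, ?comm⟩,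
    (mul_inv_cancel_left _ _).symm, ?unique⟩
  case verbal =>
    have hx := map_lift_mem_verbalSubgroup (MonoidHom.id (Coprod A B)) (Set.mem_singleton w) g
    have hA := map_lift_mem_verbalSubgroup
      ((Coprod.inl : A →* Coprod A B).comp Coprod.fst) (Set.mem_singleton w) g
    have hB := map_lift_mem_verbalSubgroup
      ((Coprod.inr : B →* Coprod A B).comp Coprod.snd) (Set.mem_singleton w) g
    exact Subgroup.mul_mem _ (Subgroup.inv_mem _ (Subgroup.mul_mem _ hA hB)) hx
  case comm => exact mem_commSubgroup_iff.2 ⟨by simp, by simp⟩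
  case unique =>
    intro a b c hc hx
    obtain ⟨hc₁, hc₂⟩ := mem_commSubgroup_iff.1 hc
    have ha : a = Coprod.fst x := by simp [hx, hc₁]
    have hb : b = Coprod.snd x := by simp [hx, hc₂]
    subst ha hb
    exact ⟨rfl, rfl, eq_inv_mul_of_mul_eq hx.symm⟩
end

section
/- Let A and B be groups, W ⊆ F_∞ a set of words, M a normal subgroup of A and N a normal subgroup of B. Then the quotient of the verbal product A ∗_W B by the normal closure of the subgroup generated by (the images of) M and N is isomorphic to the verbal product (A/M) ∗_W (B/N). -/
open Monoid
open scoped commutatorElement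

theorem lift_comp_eval {G H : Type*} [Group G] [Group H] (φ : G →* H) (f : ℕ → G)
    (w : FreeGroup ℕ) : φ (FreeGroup.lift f w) = FreeGroup.lift (φ ∘ f) w := by
  have h : φ.comp (FreeGroup.lift f) = FreeGroup.lift (φ ∘ f) :=
    FreeGroup.ext_hom _ _ (fun a => by simp)
  exact DFunLike.congr_fun h w

theorem verbalSubgroup_map_le {G H : Type*} [Group G] [Group H] (W : Set (FreeGroup ℕ))
    (φ : G →* H) : (verbalSubgroup W G).map φ ≤ verbalSubgroup W H := by
  rw [verbalSubgroup, MonoidHom.map_closure, Subgroup.closure_le]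
  rintro x ⟨y, ⟨w, hw, f, rfl⟩, rfl⟩
  exact Subgroup.subset_closure ⟨w, hw, φ ∘ f, (lift_comp_eval φ f w).symm⟩

/-- Verbal subgroups are normal. -/
instance verbalSubgroup_normal (W : Set (FreeGroup ℕ)) (G : Type*) [Group G] :
    (verbalSubgroup W G).Normal := by
  constructor
  intro n hn g
  have h := verbalSubgroup_map_le (G := G) (H := G) W (MulAut.conj g).toMonoidHom
  have h2 : (MulAut.conj g).toMonoidHom n ∈ verbalSubgroup W G := h ⟨n, hn, rfl⟩
  simpa using h2

/-- The kernel of the verbal product: (the normal closure of) `W(A ∗ B) ∩ [A,B]`.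
Since `W(A ∗ B) ∩ [A,B]` is in fact a normal subgroup of `A ∗ B`, taking the normal
closure does not change the subgroup. -/
def verbalProductKer (W : Set (FreeGroup ℕ)) (A B : Type*) [Group A] [Group B] :
    Subgroup (Coprod A B) :=
  Subgroup.normalClosure ((verbalSubgroup W (Coprod A B) ⊓ commSubgroup A B : Subgroup _) : Set _)

instance verbalProductKer_normal (W : Set (FreeGroup ℕ)) (A B : Type*) [Group A] [Group B] :
    (verbalProductKer W A B).Normal := Subgroup.normalClosure_normal

/-- The verbal product `A ∗_W B := (A ∗ B)/(W(A ∗ B) ∩ [A,B])`. -/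
abbrev VerbalProduct (W : Set (FreeGroup ℕ)) (A B : Type*) [Group A] [Group B] : Type _ :=
  Coprod A B ⧸ verbalProductKer W A B

/-- The quotient homomorphism `q : A ∗ B → A ∗_W B`. -/
def vq (W : Set (FreeGroup ℕ)) (A B : Type*) [Group A] [Group B] :
    Coprod A B →* VerbalProduct W A B :=
  QuotientGroup.mk' (verbalProductKer W A B)

/-- The copy of `A` inside the verbal product `A ∗_W B`. -/
def vinl (W : Set (FreeGroup ℕ)) (A B : Type*) [Group A] [Group B] :
    A →* VerbalProduct W A B := (vq W A B).comp Coprod.inl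

/-- The copy of `B` inside the verbal product `A ∗_W B`. -/
def vinr (W : Set (FreeGroup ℕ)) (A B : Type*) [Group A] [Group B] :
    B →* VerbalProduct W A B := (vq W A B).comp Coprod.inr

/-- `[A,B]^w`, the image of `[A,B]` in the verbal product `A ∗_W B`. -/
def commW (W : Set (FreeGroup ℕ)) (A B : Type*) [Group A] [Group B] :
    Subgroup (VerbalProduct W A B) := (commSubgroup A B).map (vq W A B)

/-!
Write `π : A ∗ B → (A/M) ∗ (B/N)` for the induced surjection. Its kernel is the normal closure
of `M ∪ N`, and `π` maps the kernel of `A ∗_W B` onto the kernel of `(A/M) ∗_W (B/N)`, so both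
groups in the statement are `(A ∗ B)/(ker π ⊔ W(A ∗ B) ∩ [A,B])`. The second fact rests on
`[A,B]` being the kernel of `A ∗ B → A × B`: an element `y ∈ W(A ∗ B)` with `π y ∈ [A/M, B/N]`
has coordinates `(m, n) ∈ (M ∩ W(A)) × (N ∩ W(B))`, and `(m n)⁻¹ y ∈ W(A ∗ B) ∩ [A,B]` has the
same image as `y`.
-/

open Function

theorem verbalSubgroup_map_of_surjective {G H : Type*} [Group G] [Group H]
    (W : Set (FreeGroup ℕ)) {φ : G →* H} (hφ : Surjective φ) :
    (verbalSubgroup W G).map φ = verbalSubgroup W H := by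
  refine le_antisymm (verbalSubgroup_map_le W φ) ?_
  rw [verbalSubgroup, Subgroup.closure_le]
  rintro x ⟨w, hw, f, rfl⟩
  refine ⟨FreeGroup.lift (surjInv hφ ∘ f) w, Subgroup.subset_closure ⟨w, hw, _, rfl⟩, ?_⟩
  rw [lift_comp_eval, ← comp_assoc, (rightInverse_surjInv hφ).comp_eq_id, id_comp]

theorem QuotientGroup.nonempty_quotient_mulEquiv_of_surjective {G G' : Type*} [Group G]
    [Group G'] {π : G →* G'} (hπ : Surjective π) (K : Subgroup G) [K.Normal]
    (L : Subgroup (G ⧸ K)) [L.Normal] (K' : Subgroup G') [K'.Normal]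
    (hL : L = π.ker.map (mk' K)) (hK' : K' = K.map π) :
    Nonempty ((G ⧸ K) ⧸ L ≃* G' ⧸ K') := by
  have hker₁ : ((mk' L).comp (mk' K)).ker = π.ker ⊔ K := by
    rw [← MonoidHom.comap_ker, ker_mk', hL, Subgroup.comap_map_eq, ker_mk']
  have hker₂ : ((mk' K').comp π).ker = π.ker ⊔ K := by
    rw [← MonoidHom.comap_ker, ker_mk', hK', Subgroup.comap_map_eq, sup_comm]
  have hsurj₁ : Surjective ((mk' L).comp (mk' K)) := (mk'_surjective L).comp (mk'_surjective K)
  have hsurj₂ : Surjective ((mk' K').comp π) := (mk'_surjective K').comp hπ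
  exact ⟨(quotientKerEquivOfSurjective _ hsurj₁).symm.trans
    ((quotientMulEquivOfEq (hker₁.trans hker₂.symm)).trans (quotientKerEquivOfSurjective _ hsurj₂))⟩

namespace Monoid.Coprod

variable {A B A' B' : Type*} [Group A] [Group B] [Group A'] [Group B']

theorem map_surjective {f : A →* A'} {g : B →* B'} (hf : Surjective f) (hg : Surjective g) :
    Surjective (map f g) := by
  intro y
  induction y using Coprod.induction_on with
  | inl a' => obtain ⟨a, rfl⟩ := hf a'; exact ⟨inl a, rfl⟩
  | inr b' => obtain ⟨b, rfl⟩ := hg b'; exact ⟨inr b, rfl⟩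
  | mul x y hx hy =>
    obtain ⟨x', rfl⟩ := hx; obtain ⟨y', rfl⟩ := hy; exact ⟨x' * y', map_mul _ _ _⟩

theorem fst_map (f : A →* A') (g : B →* B') (x : A ∗ B) : fst (map f g x) = f (fst x) := by
  induction x using Coprod.induction_on <;> simp_all

theorem snd_map (f : A →* A') (g : B →* B') (x : A ∗ B) : snd (map f g x) = g (snd x) := by
  induction x using Coprod.induction_on <;> simp_all

theorem ker_map_mk' (M : Subgroup A) (N : Subgroup B) [M.Normal] [N.Normal] :
    (map (QuotientGroup.mk' M) (QuotientGroup.mk' N)).ker =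
      Subgroup.normalClosure ((M.map inl ⊔ N.map inr : Subgroup (A ∗ B)) : Set (A ∗ B)) := by
  set R := Subgroup.normalClosure ((M.map inl ⊔ N.map inr : Subgroup (A ∗ B)) : Set (A ∗ B))
  have hM : M.map inl ≤ R := le_sup_left.trans Subgroup.le_normalClosure
  have hN : N.map inr ≤ R := le_sup_right.trans Subgroup.le_normalClosure
  refine le_antisymm ?_ ?_
  · let φ : (A ⧸ M) ∗ (B ⧸ N) →* (A ∗ B) ⧸ R := lift
      (QuotientGroup.lift M ((QuotientGroup.mk' R).comp inl) fun m hm =>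
        (QuotientGroup.eq_one_iff _).2 (hM ⟨m, hm, rfl⟩))
      (QuotientGroup.lift N ((QuotientGroup.mk' R).comp inr) fun n hn =>
        (QuotientGroup.eq_one_iff _).2 (hN ⟨n, hn, rfl⟩))
    have hlift : φ.comp (map (QuotientGroup.mk' M) (QuotientGroup.mk' N)) =
        QuotientGroup.mk' R := hom_ext rfl rfl
    intro x hx
    rw [← QuotientGroup.ker_mk' R, ← hlift, MonoidHom.mem_ker, MonoidHom.comp_apply,
      (MonoidHom.mem_ker).1 hx, map_one]
  · refine Subgroup.normalClosure_le_normal (SetLike.coe_subset_coe.2 (sup_le ?_ ?_))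
    · rintro _ ⟨m, hm, rfl⟩
      simp [(QuotientGroup.eq_one_iff m).2 hm]
    · rintro _ ⟨n, hn, rfl⟩
      simp [(QuotientGroup.eq_one_iff n).2 hn]

end Monoid.Coprod

namespace commSubgroup

open Monoid.Coprod

variable {A B A' B' : Type*} [Group A] [Group B] [Group A'] [Group B']

theorem commutator_mem (a : A) (b : B) : ⁅(inl a : A ∗ B), inr b⁆ ∈ commSubgroup A B :=
  Subgroup.subset_closure ⟨a, b, rfl⟩

theorem conj_mem_of_forall_commutator {g : A ∗ B}
    (hg : ∀ a b, g * ⁅(inl a : A ∗ B), inr b⁆ * g⁻¹ ∈ commSubgroup A B) {x : A ∗ B}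
    (hx : x ∈ commSubgroup A B) : g * x * g⁻¹ ∈ commSubgroup A B :=
  (Subgroup.closure_le ((commSubgroup A B).comap (MulAut.conj g).toMonoidHom)).2
    (by rintro _ ⟨a, b, rfl⟩; exact hg a b) hx

theorem inl_conj_commutator (a₀ a : A) (b : B) :
    inl a₀ * ⁅(inl a : A ∗ B), inr b⁆ * (inl a₀)⁻¹ =
      ⁅(inl (a₀ * a) : A ∗ B), inr b⁆ * ⁅(inl a₀ : A ∗ B), inr b⁆⁻¹ := by
  simp only [commutatorElement_def, map_mul]; group

theorem inr_conj_commutator (b₀ : B) (a : A) (b : B) :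
    inr b₀ * ⁅(inl a : A ∗ B), inr b⁆ * (inr b₀)⁻¹ =
      ⁅(inl a : A ∗ B), inr b₀⁆⁻¹ * ⁅(inl a : A ∗ B), (inr (b₀ * b) : A ∗ B)⁆ := by
  simp only [commutatorElement_def, map_mul]; group

instance normal : (commSubgroup A B).Normal where
  conj_mem x hx g := by
    induction g using Monoid.Coprod.induction_on generalizing x with
    | inl a₀ =>
      refine conj_mem_of_forall_commutator (fun a b => ?_) hx
      rw [inl_conj_commutator]
      exact mul_mem (commutator_mem _ _) (inv_mem (commutator_mem _ _))
    | inr b₀ =>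
      refine conj_mem_of_forall_commutator (fun a b => ?_) hx
      rw [inr_conj_commutator]
      exact mul_mem (inv_mem (commutator_mem _ _)) (commutator_mem _ _)
    | mul g h hg hh =>
      simpa only [mul_inv_rev, mul_assoc] using hg _ (hh x hx)

theorem eq_ker_toProd : commSubgroup A B = (toProd : A ∗ B →* A × B).ker := by
  refine le_antisymm ((Subgroup.closure_le _).2 ?_) ?_
  · rintro _ ⟨a, b, rfl⟩
    simp [commutatorElement_def]
  · have hcomm : ∀ (a : A) (b : B), Commute (QuotientGroup.mk' (commSubgroup A B) (inl a))
        (QuotientGroup.mk' (commSubgroup A B) (inr b)) := fun a b =>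
      commutatorElement_eq_one_iff_commute.1 <| by
        rw [← map_commutatorElement, QuotientGroup.mk'_apply, QuotientGroup.eq_one_iff]
        exact commutator_mem a b
    let θ : A × B →* (A ∗ B) ⧸ commSubgroup A B := MonoidHom.noncommCoprod
      ((QuotientGroup.mk' _).comp inl) ((QuotientGroup.mk' _).comp inr) hcomm
    have hθ : θ.comp toProd = QuotientGroup.mk' (commSubgroup A B) :=
      hom_ext (MonoidHom.ext fun a => by simp [θ]) (MonoidHom.ext fun b => by simp [θ])
    intro x hx
    rw [← QuotientGroup.ker_mk' (commSubgroup A B), ← hθ, MonoidHom.mem_ker,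
      MonoidHom.comp_apply, (MonoidHom.mem_ker).1 hx, map_one]

theorem mem_iff_fst_eq_one_and_snd_eq_one {x : A ∗ B} :
    x ∈ commSubgroup A B ↔ fst x = 1 ∧ snd x = 1 := by
  rw [eq_ker_toProd, MonoidHom.mem_ker, ← prod_mk_fst_snd, Prod.mk_eq_one]

theorem map_le (f : A →* A') (g : B →* B') :
    (commSubgroup A B).map (map f g) ≤ commSubgroup A' B' := by
  rw [commSubgroup, MonoidHom.map_closure, Subgroup.closure_le]
  rintro _ ⟨_, ⟨a, b, rfl⟩, rfl⟩
  exact Subgroup.subset_closure ⟨f a, g b, by simp [commutatorElement_def]⟩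

end commSubgroup

section VerbalProduct

open Monoid.Coprod

variable (W : Set (FreeGroup ℕ)) {A B A' B' : Type*} [Group A] [Group B] [Group A'] [Group B']
  {f : A →* A'} {g : B →* B'}

theorem map_verbalSubgroup_inf_commSubgroup (hf : Surjective f) (hg : Surjective g) :
    (verbalSubgroup W (A ∗ B) ⊓ commSubgroup A B).map (map f g) =
      verbalSubgroup W (A' ∗ B') ⊓ commSubgroup A' B' := by
  refine le_antisymm (le_inf ((Subgroup.map_mono inf_le_left).trans (verbalSubgroup_map_le W _))
    ((Subgroup.map_mono inf_le_right).trans (commSubgroup.map_le f g))) ?_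
  rintro _ ⟨hv, hc⟩
  rw [← verbalSubgroup_map_of_surjective W (map_surjective hf hg)] at hv
  obtain ⟨y, hy, rfl⟩ := hv
  obtain ⟨hfst, hsnd⟩ := commSubgroup.mem_iff_fst_eq_one_and_snd_eq_one.1 hc
  rw [fst_map] at hfst
  rw [snd_map] at hsnd
  set c : A ∗ B := inl (fst y) * inr (snd y)
  have hc_verbal : c ∈ verbalSubgroup W (A ∗ B) :=
    mul_mem (verbalSubgroup_map_le W inl ⟨_, verbalSubgroup_map_le W fst ⟨y, hy, rfl⟩, rfl⟩)
      (verbalSubgroup_map_le W inr ⟨_, verbalSubgroup_map_le W snd ⟨y, hy, rfl⟩, rfl⟩)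
  have hc_inv_verbal : c⁻¹ * y ∈ verbalSubgroup W (A ∗ B) := mul_mem (inv_mem hc_verbal) hy
  have hc_comm : c⁻¹ * y ∈ commSubgroup A B := by
    simp [commSubgroup.mem_iff_fst_eq_one_and_snd_eq_one, c]
  have hc_map : map f g c = 1 := by simp [c, hfst, hsnd]
  exact ⟨c⁻¹ * y, ⟨hc_inv_verbal, hc_comm⟩, by simp [hc_map]⟩

theorem verbalProductKer_map (hf : Surjective f) (hg : Surjective g) :
    (verbalProductKer W A B).map (map f g) = verbalProductKer W A' B' := by
  rw [verbalProductKer, verbalProductKer, Subgroup.map_normalClosure _ _ (map_surjective hf hg),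
    ← Subgroup.coe_map, map_verbalSubgroup_inf_commSubgroup W hf hg]

end VerbalProduct

/-- The quotient of the verbal product `A ∗_W B` by the normal closure of the subgroup
generated by the images of `M` and `N` is isomorphic to the verbal product
`(A/M) ∗_W (B/N)`. -/
theorem verbalProduct_quotient_iso {A B : Type*} [Group A] [Group B] (W : Set (FreeGroup ℕ))
    (M : Subgroup A) (N : Subgroup B) [M.Normal] [N.Normal] :
    Nonempty ((VerbalProduct W A B ⧸ Subgroup.normalClosure
        ((M.map (vinl W A B) ⊔ N.map (vinr W A B) : Subgroup (VerbalProduct W A B)) :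
          Set (VerbalProduct W A B))) ≃*
      VerbalProduct W (A ⧸ M) (B ⧸ N)) := by
  have hM := QuotientGroup.mk'_surjective M
  have hN := QuotientGroup.mk'_surjective N
  refine QuotientGroup.nonempty_quotient_mulEquiv_of_surjective (Coprod.map_surjective hM hN)
    (verbalProductKer W A B) _ _ ?_ (verbalProductKer_map W hM hN).symm
  rw [Coprod.ker_map_mk', Subgroup.map_normalClosure _ _ (QuotientGroup.mk'_surjective _),
    ← Subgroup.coe_map, Subgroup.map_sup, Subgroup.map_map, Subgroup.map_map]
  rfl
end

section
/- Let A and B be groups and W ⊆ F_∞ a set of words. If W(A) = A, then the verbal product A ∗_W B is isomorphic to the direct product A × B. -/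
open Monoid
open scoped commutatorElement

/-
Both `A ∗_W B` and `A × B` are quotients of `A ∗ B`, and `[A,B]` lies in the kernel of
`A ∗ B → A × B`, so `A ∗_W B` maps onto `A × B`. Conversely, if `W(A) = A` then the copy of `A`
in `A ∗ B` lies in the normal subgroup `W(A ∗ B)`, hence so does every commutator `[a,b]`; these
commutators are then killed in `A ∗_W B`, so the copies of `A` and `B` there commute and
`A × B → A ∗_W B` is defined.
-/

theorem map_mem_verbalSubgroup_of_eq_top {G H : Type*} [Group G] [Group H]
    {W : Set (FreeGroup ℕ)} (h : verbalSubgroup W G = ⊤) (φ : G →* H) (g : G) :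
    φ g ∈ verbalSubgroup W H :=
  verbalSubgroup_map_le W φ ⟨g, h ▸ Subgroup.mem_top g, rfl⟩

namespace Monoid.Coprod

variable {A B : Type*} [Group A] [Group B]

theorem commSubgroup_le_ker_toProd : commSubgroup A B ≤ (toProd : Coprod A B →* A × B).ker := by
  rw [commSubgroup, Subgroup.closure_le]
  rintro _ ⟨a, b, rfl⟩
  rw [SetLike.mem_coe, MonoidHom.mem_ker, map_commutatorElement, toProd_apply_inl,
    toProd_apply_inr, commutatorElement_eq_one_iff_commute]
  exact (Commute.one_right a).prod (Commute.one_left b)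

theorem verbalProductKer_le_ker_toProd (W : Set (FreeGroup ℕ)) :
    verbalProductKer W A B ≤ (toProd : Coprod A B →* A × B).ker :=
  Subgroup.normalClosure_le_normal fun _ hx => commSubgroup_le_ker_toProd hx.2

theorem commutatorElement_inl_inr_mem_verbalProductKer {W : Set (FreeGroup ℕ)}
    (h : verbalSubgroup W A = ⊤) (a : A) (b : B) :
    ⁅(inl a : Coprod A B), inr b⁆ ∈ verbalProductKer W A B := by
  refine Subgroup.subset_normalClosure ⟨?_, Subgroup.subset_closure ⟨a, b, rfl⟩⟩
  exact Subgroup.commutator_le_left _ ⊤ <| Subgroup.commutator_mem_commutator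
    (map_mem_verbalSubgroup_of_eq_top h (inl : A →* Coprod A B) a) (Subgroup.mem_top _)

/-- Such an `N` is necessarily the whole kernel of `toProd`. -/
def quotientMulEquivProd (N : Subgroup (Coprod A B)) [N.Normal] (hN : N ≤ toProd.ker)
    (hcomm : ∀ (a : A) (b : B), ⁅(inl a : Coprod A B), inr b⁆ ∈ N) : Coprod A B ⧸ N ≃* A × B :=
  have commute_mk (a : A) (b : B) :
      Commute ((QuotientGroup.mk' N).comp inl a) ((QuotientGroup.mk' N).comp inr b) := by
    rw [← commutatorElement_eq_one_iff_commute, MonoidHom.comp_apply, MonoidHom.comp_apply,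
      ← map_commutatorElement, QuotientGroup.mk'_apply, QuotientGroup.eq_one_iff]
    exact hcomm a b
  MonoidHom.toMulEquiv (QuotientGroup.lift N toProd hN)
    (MonoidHom.noncommCoprod _ _ commute_mk)
    (QuotientGroup.monoidHom_ext N <| hom_ext (by ext; simp) (by ext; simp))
    (by ext <;> simp)

end Monoid.Coprod

/-- If `W(A) = A`, then `A ∗_W B` is isomorphic to the direct product `A × B`. -/
theorem verbalProduct_eq_directProduct {A B : Type*} [Group A] [Group B]
    (W : Set (FreeGroup ℕ)) (h : verbalSubgroup W A = ⊤) :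
    Nonempty (VerbalProduct W A B ≃* A × B) :=
  ⟨Coprod.quotientMulEquivProd _ (Coprod.verbalProductKer_le_ker_toProd W)
    (Coprod.commutatorElement_inl_inr_mem_verbalProductKer h)⟩
end

section
/- Let A and B be groups, solvable of derived length m and n respectively, and let k ≥ 1. Then the k-solvable product A ∗_{s_k} B is a solvable group of derived length at most max{k, m, n}. -/
open Monoid
open scoped commutatorElement

/-- The words `s_k` defining solvable products: `s_1 = [x_1, x_2]` and
`s_k(x_1, …, x_{2^k}) = [s_{k-1}(x_1, …, x_{2^{k-1}}), s_{k-1}(x_{2^{k-1}+1}, …, x_{2^k})]`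
(generators indexed from `0`; the second factor is obtained by shifting the generators
by `2^{k-1}`). -/
def sWord : ℕ → FreeGroup ℕ
  | 0 => 1
  | 1 => ⁅FreeGroup.of 0, FreeGroup.of 1⁆
  | (k + 2) => ⁅sWord (k + 1),
      FreeGroup.lift (fun i => FreeGroup.of (i + 2 ^ (k + 1))) (sWord (k + 1))⁆

/-!
Let `l = max k m n`. The `l`-th derived subgroup of `A ∗ B` lies in the verbal subgroup of
`s_k`, because `[s_j(x), s_j(y)]` is `s_{j+1}` evaluated on the concatenated tuple. It also lies
in `[A,B]`: its image in `A × B` is `A^(l) × B^(l) = 1`, and `[A,B]` is a normal subgroup whose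
quotient `(A ∗ B)/[A,B]` is `A × B`. So it dies in `A ∗_{s_k} B`, whose derived series is the image
of that of `A ∗ B`.
-/

namespace Subgroup

variable {G : Type*} [Group G]

theorem commutator_closure_le {S T : Set G} {N : Subgroup G} [N.Normal]
    (h : ∀ s ∈ S, ∀ t ∈ T, ⁅s, t⁆ ∈ N) : ⁅closure S, closure T⁆ ≤ N := by
  rw [← QuotientGroup.ker_mk' N, ← map_eq_bot_iff, map_commutator, MonoidHom.map_closure,
    MonoidHom.map_closure, commutator_eq_bot_iff_le_centralizer, closure_le, centralizer_closure]
  rintro _ ⟨s, hs, rfl⟩ _ ⟨t, ht, rfl⟩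
  rw [eq_comm, ← commutatorElement_eq_one_iff_mul_comm, ← map_commutatorElement,
    ← MonoidHom.mem_ker, QuotientGroup.ker_mk']
  exact h s hs t ht

end Subgroup

section SolvableWords

variable {G : Type*} [Group G]

theorem lift_mem_verbalSubgroup {W : Set (FreeGroup ℕ)} {w : FreeGroup ℕ} (hw : w ∈ W)
    (f : ℕ → G) : FreeGroup.lift f w ∈ verbalSubgroup W G :=
  Subgroup.subset_closure ⟨w, hw, f, rfl⟩

theorem lift_sWord_add_two (k : ℕ) (f : ℕ → G) :
    FreeGroup.lift f (sWord (k + 2)) =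
      ⁅FreeGroup.lift f (sWord (k + 1)),
        FreeGroup.lift (fun i => f (i + 2 ^ (k + 1))) (sWord (k + 1))⁆ := by
  rw [sWord, map_commutatorElement, lift_comp_eval]
  congr 3
  exact funext fun i => FreeGroup.lift_apply_of

theorem lift_sWord_congr : ∀ (k : ℕ) {f g : ℕ → G}, (∀ i < 2 ^ k, f i = g i) →
    FreeGroup.lift f (sWord k) = FreeGroup.lift g (sWord k)
  | 0, _, _, _ => rfl
  | 1, f, g, h => by
      simp only [sWord, map_commutatorElement, FreeGroup.lift_apply_of, h 0 (by norm_num),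
        h 1 (by norm_num)]
  | k + 2, f, g, h => by
      have hpow : 2 ^ (k + 2) = 2 ^ (k + 1) + 2 ^ (k + 1) := by ring
      rw [lift_sWord_add_two, lift_sWord_add_two,
        lift_sWord_congr (k + 1) fun i hi => h i (by omega),
        lift_sWord_congr (k + 1) fun i hi => h (i + 2 ^ (k + 1)) (by omega)]

/-- The witness is the concatenation of the two tuples. -/
theorem commutator_lift_sWord_mem (k : ℕ) (f g : ℕ → G) :
    ⁅FreeGroup.lift f (sWord (k + 1)), FreeGroup.lift g (sWord (k + 1))⁆ ∈
      verbalSubgroup {sWord (k + 2)} G := by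
  let fg : ℕ → G := fun i => if i < 2 ^ (k + 1) then f i else g (i - 2 ^ (k + 1))
  have hf : FreeGroup.lift fg (sWord (k + 1)) = FreeGroup.lift f (sWord (k + 1)) :=
    lift_sWord_congr (k + 1) fun i hi => if_pos hi
  have hg : FreeGroup.lift (fun i => fg (i + 2 ^ (k + 1))) (sWord (k + 1)) =
      FreeGroup.lift g (sWord (k + 1)) :=
    lift_sWord_congr (k + 1) fun i _ => by simp [fg]
  rw [← hf, ← hg, ← lift_sWord_add_two]
  exact lift_mem_verbalSubgroup (Set.mem_singleton _) fg

theorem commutator_verbalSubgroup_sWord_le (k : ℕ) :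
    ⁅verbalSubgroup {sWord (k + 1)} G, verbalSubgroup {sWord (k + 1)} G⁆ ≤
      verbalSubgroup {sWord (k + 2)} G := by
  refine Subgroup.commutator_closure_le ?_
  rintro _ ⟨_, rfl, f, rfl⟩ _ ⟨_, rfl, g, rfl⟩
  exact commutator_lift_sWord_mem k f g

theorem derivedSeries_le_verbalSubgroup_sWord (k : ℕ) :
    derivedSeries G (k + 1) ≤ verbalSubgroup {sWord (k + 1)} G := by
  induction k with
  | zero =>
    rw [derivedSeries_one, commutator_def, Subgroup.commutator_le]
    intro g _ h _
    convert lift_mem_verbalSubgroup (Set.mem_singleton (sWord 1)) fun i => if i = 0 then g else h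
    simp [sWord]
  | succ k ih =>
    rw [derivedSeries_succ]
    exact (Subgroup.commutator_mono ih ih).trans (commutator_verbalSubgroup_sWord_le k)

end SolvableWords

namespace Monoid.Coprod

variable {A B : Type*} [Group A] [Group B]

theorem commSubgroup_eq_commutator :
    commSubgroup A B = ⁅(inl : A →* A ∗ B).range, (inr : B →* A ∗ B).range⁆ := by
  rw [commSubgroup, Subgroup.commutator_def]
  congr 1
  ext x
  constructor
  · rintro ⟨a, b, rfl⟩
    exact ⟨_, ⟨a, rfl⟩, _, ⟨b, rfl⟩, rfl⟩
  · rintro ⟨_, ⟨a, rfl⟩, _, ⟨b, rfl⟩, rfl⟩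
    exact ⟨a, b, rfl⟩

instance commSubgroup_normal : (commSubgroup A B).Normal := by
  rw [commSubgroup_eq_commutator, ← Subgroup.normalizer_eq_top_iff, eq_top_iff,
    ← range_inl_sup_range_inr]
  exact sup_le (Subgroup.normalizer_commutator_ge_left _ _)
    (Subgroup.normalizer_commutator_ge_right _ _)

/-- `A × B` is `A ∗ B` with `A` and `B` made to commute. -/
theorem ker_toProd_le {N : Subgroup (A ∗ B)} [N.Normal]
    (h : ∀ a b, ⁅(inl a : A ∗ B), inr b⁆ ∈ N) : (toProd : A ∗ B →* A × B).ker ≤ N := by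
  have hcomm : ∀ a b,
      Commute ((QuotientGroup.mk' N).comp inl a) ((QuotientGroup.mk' N).comp inr b) := by
    intro a b
    rw [← commutatorElement_eq_one_iff_commute, MonoidHom.comp_apply, MonoidHom.comp_apply,
      ← map_commutatorElement, ← MonoidHom.mem_ker, QuotientGroup.ker_mk']
    exact h a b
  have hfactor : (MonoidHom.noncommCoprod _ _ hcomm).comp toProd = QuotientGroup.mk' N := by
    ext <;> simp
  rw [← QuotientGroup.ker_mk' N, ← hfactor, ← MonoidHom.comap_ker]
  exact MonoidHom.ker_le_comap _ _

theorem derivedSeries_le_ker_toProd {l : ℕ} (hA : derivedSeries A l = ⊥)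
    (hB : derivedSeries B l = ⊥) : derivedSeries (A ∗ B) l ≤ (toProd : A ∗ B →* A × B).ker := by
  intro x hx
  have hfst := map_derivedSeries_le_derivedSeries (fst : A ∗ B →* A) l ⟨x, hx, rfl⟩
  have hsnd := map_derivedSeries_le_derivedSeries (snd : A ∗ B →* B) l ⟨x, hx, rfl⟩
  rw [hA, Subgroup.mem_bot] at hfst
  rw [hB, Subgroup.mem_bot] at hsnd
  rw [MonoidHom.mem_ker, ← prod_mk_fst_snd, hfst, hsnd, Prod.mk_one_one]

end Monoid.Coprod

/-- The `k`-solvable product of solvable groups of derived lengths `m` and `n` is a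
solvable group of derived length at most `max {k, m, n}`. -/
theorem solvableProduct_isSolvable {A B : Type*} [Group A] [Group B] (k m n : ℕ)
    (hk : 1 ≤ k)
    (hm : derivedSeries A m = ⊥ ∧ ∀ l, derivedSeries A l = ⊥ → m ≤ l)
    (hn : derivedSeries B n = ⊥ ∧ ∀ l, derivedSeries B l = ⊥ → n ≤ l) :
    IsSolvable (VerbalProduct {sWord k} A B) ∧
    derivedSeries (VerbalProduct {sWord k} A B) (max k (max m n)) = ⊥ := by
  obtain ⟨k, rfl⟩ : ∃ j, k = j + 1 := ⟨k - 1, by omega⟩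
  set l := max (k + 1) (max m n)
  have hA : derivedSeries A l = ⊥ :=
    le_bot_iff.mp (hm.1 ▸ derivedSeries_antitone A (show m ≤ l by omega))
  have hB : derivedSeries B l = ⊥ :=
    le_bot_iff.mp (hn.1 ▸ derivedSeries_antitone B (show n ≤ l by omega))
  have hverbal : derivedSeries (Coprod A B) l ≤ verbalSubgroup {sWord (k + 1)} (Coprod A B) :=
    (derivedSeries_antitone _ (show k + 1 ≤ l by omega)).trans
      (derivedSeries_le_verbalSubgroup_sWord k)
  have hcomm : derivedSeries (Coprod A B) l ≤ commSubgroup A B :=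
    (Coprod.derivedSeries_le_ker_toProd hA hB).trans
      (Coprod.ker_toProd_le fun a b => Subgroup.subset_closure ⟨a, b, rfl⟩)
  have hker : derivedSeries (Coprod A B) l ≤ (vq {sWord (k + 1)} A B).ker := by
    rw [vq, QuotientGroup.ker_mk']
    exact fun x hx => Subgroup.subset_normalClosure ⟨hverbal hx, hcomm hx⟩
  have hbot : derivedSeries (VerbalProduct {sWord (k + 1)} A B) l = ⊥ := by
    rw [← map_derivedSeries_eq (QuotientGroup.mk'_surjective _), Subgroup.map_eq_bot_iff]
    exact hker
  exact ⟨⟨l, hbot⟩, hbot⟩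
end

section
/- Let {G_i}_{i∈I} be a family of groups and let I_0 ⊆ I. Let W ⊆ F_∞ be a set of words, let ĩ : ∗_{i∈I_0} G_i → ∗_{i∈I} G_i be the natural embedding of free products, and let q, q̃ be the quotient homomorphisms onto the verbal products ∗^W_{i∈I_0} G_i and ∗^W_{i∈I} G_i respectively. Then ĩ maps ker(q) into ker(q̃), so it induces a homomorphism i_{I_0} : ∗^W_{i∈I_0} G_i → ∗^W_{i∈I} G_i with i_{I_0} ∘ q = q̃ ∘ ĩ, and this induced homomorphism i_{I_0} is injective. -/
open Monoid
open scoped commutatorElement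

/-- The cartesian subgroup of the free product `∗_{i} G_i`: the normal subgroup generated
by the commutators `[g_i, g_j]` with `g_i ∈ G_i`, `g_j ∈ G_j`, `i ≠ j`. -/
def cartesianSubgroupI {ι : Type*} (G : ι → Type*) [∀ i, Group (G i)] :
    Subgroup (Monoid.CoprodI G) :=
  Subgroup.normalClosure
    {x | ∃ (i j : ι) (_ : i ≠ j) (a : G i) (b : G j),
      x = ⁅Monoid.CoprodI.of a, Monoid.CoprodI.of b⁆}

/-- The kernel of the verbal product of a family: (the normal closure of)
`W(∗_i G_i) ∩ [G_i]`.  Since this intersection is in fact normal, taking the normal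
closure does not change the subgroup. -/
def verbalKerI {ι : Type*} (W : Set (FreeGroup ℕ)) (G : ι → Type*) [∀ i, Group (G i)] :
    Subgroup (Monoid.CoprodI G) :=
  Subgroup.normalClosure
    ((verbalSubgroup W (Monoid.CoprodI G) ⊓ cartesianSubgroupI G : Subgroup _) :
      Set (Monoid.CoprodI G))

instance verbalKerI_normal {ι : Type*} (W : Set (FreeGroup ℕ)) (G : ι → Type*)
    [∀ i, Group (G i)] : (verbalKerI W G).Normal := Subgroup.normalClosure_normal

/-- The verbal product `∗^W_{i ∈ ι} G_i` of a family of groups. -/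
abbrev VerbalProductI {ι : Type*} (W : Set (FreeGroup ℕ)) (G : ι → Type*)
    [∀ i, Group (G i)] : Type _ :=
  Monoid.CoprodI G ⧸ verbalKerI W G

/-- The natural embedding `∗_{i ∈ I₀} G_i → ∗_{i ∈ I} G_i` of free products. -/
def subfamilyHom {ι : Type*} (G : ι → Type*) [∀ i, Group (G i)] (I₀ : Set ι) :
    Monoid.CoprodI (fun i : I₀ => G i) →* Monoid.CoprodI G :=
  Monoid.CoprodI.lift fun i : I₀ => (Monoid.CoprodI.of : G i →* Monoid.CoprodI G)

/-! The retraction `∗_{i ∈ I} G_i → ∗_{i ∈ I₀} G_i` killing the factors outside `I₀` is a left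
inverse of the natural embedding, and both homomorphisms preserve verbal subgroups (as every
homomorphism does) and cartesian subgroups. Hence both descend to the verbal products, where the
retraction is still a left inverse of the embedding. -/

theorem verbalSubgroup_le_comap {G H : Type*} [Group G] [Group H] (W : Set (FreeGroup ℕ))
    (φ : G →* H) : verbalSubgroup W G ≤ (verbalSubgroup W H).comap φ := by
  refine (Subgroup.closure_le _).2 ?_
  rintro _ ⟨w, hw, f, rfl⟩
  exact Subgroup.subset_closure ⟨w, hw, φ ∘ f, (lift_comp_eval φ f w).symm⟩

section CoprodI

variable {ι κ : Type*} {G : ι → Type*} {H : κ → Type*} [∀ i, Group (G i)] [∀ k, Group (H k)]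

theorem commutatorElement_of_mem_cartesianSubgroupI {i j : ι} (hij : i ≠ j) (a : G i)
    (b : G j) : ⁅CoprodI.of a, CoprodI.of b⁆ ∈ cartesianSubgroupI G :=
  Subgroup.subset_normalClosure ⟨i, j, hij, a, b, rfl⟩

theorem cartesianSubgroupI_le_comap (φ : CoprodI G →* CoprodI H)
    (h : ∀ i j, i ≠ j → ∀ (a : G i) (b : G j),
      ⁅φ (CoprodI.of a), φ (CoprodI.of b)⁆ ∈ cartesianSubgroupI H) :
    cartesianSubgroupI G ≤ (cartesianSubgroupI H).comap φ := by
  have : ((cartesianSubgroupI H).comap φ).Normal :=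
    Subgroup.Normal.comap Subgroup.normalClosure_normal φ
  refine Subgroup.normalClosure_le_normal ?_
  rintro _ ⟨i, j, hij, a, b, rfl⟩
  simpa only [SetLike.mem_coe, Subgroup.mem_comap, map_commutatorElement] using h i j hij a b

theorem verbalKerI_le_comap (W : Set (FreeGroup ℕ)) (φ : CoprodI G →* CoprodI H)
    (hφ : cartesianSubgroupI G ≤ (cartesianSubgroupI H).comap φ) :
    verbalKerI W G ≤ (verbalKerI W H).comap φ := by
  have : ((verbalKerI W H).comap φ).Normal := Subgroup.Normal.comap (verbalKerI_normal W H) φ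
  refine Subgroup.normalClosure_le_normal ?_
  rintro _ ⟨hV, hC⟩
  exact Subgroup.subset_normalClosure ⟨verbalSubgroup_le_comap W φ hV, hφ hC⟩

end CoprodI

section Subfamily

variable {ι : Type*} (G : ι → Type*) [∀ i, Group (G i)] (I₀ : Set ι)

open Classical in
noncomputable def subfamilyRetraction :
    CoprodI G →* CoprodI (fun i : I₀ => G i) :=
  CoprodI.lift fun i =>
    if h : i ∈ I₀ then CoprodI.of (M := fun j : I₀ => G j) (i := ⟨i, h⟩) else 1

variable {G I₀}

@[simp]
theorem subfamilyHom_of {i : I₀} (a : G i) :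
    subfamilyHom G I₀ (CoprodI.of a) = CoprodI.of (i := (i : ι)) a :=
  CoprodI.lift_of _ _

theorem subfamilyRetraction_of_of_mem {i : ι} (hi : i ∈ I₀) (a : G i) :
    subfamilyRetraction G I₀ (CoprodI.of a) =
      CoprodI.of (M := fun j : I₀ => G j) (i := ⟨i, hi⟩) a := by
  simp [subfamilyRetraction, dif_pos hi]

theorem subfamilyRetraction_of_of_notMem {i : ι} (hi : i ∉ I₀) (a : G i) :
    subfamilyRetraction G I₀ (CoprodI.of a) = 1 := by
  simp [subfamilyRetraction, dif_neg hi]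

theorem subfamilyRetraction_subfamilyHom (x : CoprodI (fun i : I₀ => G i)) :
    subfamilyRetraction G I₀ (subfamilyHom G I₀ x) = x := by
  suffices (subfamilyRetraction G I₀).comp (subfamilyHom G I₀) = MonoidHom.id _ from
    DFunLike.congr_fun this x
  refine CoprodI.ext_hom _ _ fun i => MonoidHom.ext fun a => ?_
  simp [subfamilyRetraction_of_of_mem i.2]

theorem cartesianSubgroupI_le_comap_subfamilyHom :
    cartesianSubgroupI (fun i : I₀ => G i) ≤
      (cartesianSubgroupI G).comap (subfamilyHom G I₀) :=
  cartesianSubgroupI_le_comap _ fun i j hij a b => by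
    simpa using commutatorElement_of_mem_cartesianSubgroupI (Subtype.coe_injective.ne hij) a b

theorem cartesianSubgroupI_le_comap_subfamilyRetraction :
    cartesianSubgroupI G ≤
      (cartesianSubgroupI (fun i : I₀ => G i)).comap (subfamilyRetraction G I₀) := by
  refine cartesianSubgroupI_le_comap _ fun i j hij a b => ?_
  by_cases hi : i ∈ I₀
  · by_cases hj : j ∈ I₀
    · rw [subfamilyRetraction_of_of_mem hi, subfamilyRetraction_of_of_mem hj]
      exact commutatorElement_of_mem_cartesianSubgroupI (by simpa using hij) _ _
    · rw [subfamilyRetraction_of_of_notMem hj, commutatorElement_one_right]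
      exact Subgroup.one_mem _
  · rw [subfamilyRetraction_of_of_notMem hi, commutatorElement_one_left]
    exact Subgroup.one_mem _

end Subfamily

/-- The natural embedding of free products maps the kernel defining the verbal product
over `I₀` into the one over `I`, and the induced homomorphism between the verbal
products is injective and compatible with the quotient maps. -/
theorem verbalProductI_subfamily_embedding {ι : Type*} (G : ι → Type*) [∀ i, Group (G i)]
    (I₀ : Set ι) (W : Set (FreeGroup ℕ)) :
    (verbalKerI W (fun i : I₀ => G i)).map (subfamilyHom G I₀) ≤ verbalKerI W G ∧
    ∃ ι₀ : VerbalProductI W (fun i : I₀ => G i) →* VerbalProductI W G,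
      (∀ x : Monoid.CoprodI (fun i : I₀ => G i),
        ι₀ (QuotientGroup.mk x) = QuotientGroup.mk (subfamilyHom G I₀ x)) ∧
      Function.Injective ι₀ := by
  have hle := verbalKerI_le_comap W _
    (cartesianSubgroupI_le_comap_subfamilyHom (G := G) (I₀ := I₀))
  have hret := verbalKerI_le_comap W _
    (cartesianSubgroupI_le_comap_subfamilyRetraction (G := G) (I₀ := I₀))
  refine ⟨Subgroup.map_le_iff_le_comap.2 hle,
    QuotientGroup.map _ _ (subfamilyHom G I₀) hle, fun _ => rfl, ?_⟩
  refine Function.LeftInverse.injective (g := QuotientGroup.map _ _ _ hret) fun y => ?_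
  induction y using QuotientGroup.induction_on with
  | H x => exact congrArg QuotientGroup.mk (subfamilyRetraction_subfamilyHom x)
end
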